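/- Let k be a natural number and let U, U' be nonzero real numbers such that all intermediate denominators below are nonzero. Then U = (29k^3 + 138k^2 + 216k + 112)/(6(k+1)) - (k+2)^5/(6(k+1)((5k^2+20k+20) + 6U')) holds if and only if U = (2k+3)(2k+4) + (k+2)^3/((k+1) + (k+1)/(4 + 1/(1 + (k+2)^2/U'))). -/

import Mathlib

/-!
With `c = (k + 2)²`, the three lowest levels of the continued fraction collapse to
`(k + 1) (6U' + 5c) / (5U' + 4c)`, and `6U' + 5c = 5k² + 20k + 20 + 6U'` is exactly the
denominator of the rational recursion. Both right-hand sides are then the same rational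
function of `k` and `U'`.
-/

theorem four_add_one_div_one_add_div {K : Type*} [Field K] {c x : K} (hx : x ≠ 0)
    (hxc : x + c ≠ 0) : 4 + 1 / (1 + c / x) = (5 * x + 4 * c) / (x + c) := by
  field_simp
  ring

theorem add_div_div_eq_mul_add_div {K : Type*} [Field K] (a : K) {p : K} (q : K) (hp : p ≠ 0) :
    a + a / (p / q) = a * (p + q) / p := by
  field_simp

theorem recursion_rhs_eq_contFrac_rhs {K : Type*} [Field K] [CharZero K] {k x : K}
    (hk : k + 1 ≠ 0) (hD : 5 * k ^ 2 + 20 * k + 20 + 6 * x ≠ 0) :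
    (29 * k ^ 3 + 138 * k ^ 2 + 216 * k + 112) / (6 * (k + 1)) -
        (k + 2) ^ 5 / (6 * (k + 1) * (5 * k ^ 2 + 20 * k + 20 + 6 * x)) =
      (2 * k + 3) * (2 * k + 4) +
        (k + 2) ^ 3 / ((k + 1) * (5 * x + 4 * (k + 2) ^ 2 + (x + (k + 2) ^ 2)) /
          (5 * x + 4 * (k + 2) ^ 2)) := by
  have h6 : (6 : K) * (k + 1) ≠ 0 := mul_ne_zero (by norm_num) hk
  have h6D := mul_ne_zero h6 hD
  have hkD := mul_ne_zero hk hD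
  rw [show 5 * x + 4 * (k + 2) ^ 2 + (x + (k + 2) ^ 2) = 5 * k ^ 2 + 20 * k + 20 + 6 * x by ring,
    div_div_eq_mul_div, div_sub_div _ _ h6 h6D, add_div' _ _ _ hkD,
    div_eq_div_iff (mul_ne_zero h6 h6D) hkD]
  ring

theorem U_cf_equiv_general (k : ℕ) (U U' : ℝ) (hU' : U' ≠ 0)
    (h1 : (5 * (k : ℝ) ^ 2 + 20 * (k : ℝ) + 20) + 6 * U' ≠ 0)
    (h2 : 1 + ((k : ℝ) + 2) ^ 2 / U' ≠ 0)
    (h3 : 4 + 1 / (1 + ((k : ℝ) + 2) ^ 2 / U') ≠ 0) :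
    U = (29 * (k : ℝ) ^ 3 + 138 * (k : ℝ) ^ 2 + 216 * (k : ℝ) + 112) / (6 * ((k : ℝ) + 1)) -
        ((k : ℝ) + 2) ^ 5 /
          (6 * ((k : ℝ) + 1) * ((5 * (k : ℝ) ^ 2 + 20 * (k : ℝ) + 20) + 6 * U')) ↔
      U = (2 * (k : ℝ) + 3) * (2 * (k : ℝ) + 4) +
        ((k : ℝ) + 2) ^ 3 /
          (((k : ℝ) + 1) + ((k : ℝ) + 1) /
            (4 + 1 / (1 + ((k : ℝ) + 2) ^ 2 / U'))) := by
  have hA : U' + ((k : ℝ) + 2) ^ 2 ≠ 0 := (div_ne_zero_iff.mp (one_add_div hU' ▸ h2)).1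
  rw [four_add_one_div_one_add_div hU' hA] at h3 ⊢
  have hB : 5 * U' + 4 * ((k : ℝ) + 2) ^ 2 ≠ 0 := (div_ne_zero_iff.mp h3).1
  rw [add_div_div_eq_mul_add_div _ _ hB, recursion_rhs_eq_contFrac_rhs (by positivity) h1]

theorem U_cf_equiv (k : ℕ) (U U' : ℝ) (hU : U ≠ 0) (hU' : U' ≠ 0)
    (h1 : (5 * (k : ℝ) ^ 2 + 20 * (k : ℝ) + 20) + 6 * U' ≠ 0)
    (h2 : 1 + ((k : ℝ) + 2) ^ 2 / U' ≠ 0)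
    (h3 : 4 + 1 / (1 + ((k : ℝ) + 2) ^ 2 / U') ≠ 0)
    (h4 : ((k : ℝ) + 1) + ((k : ℝ) + 1) / (4 + 1 / (1 + ((k : ℝ) + 2) ^ 2 / U')) ≠ 0) :
    U = (29 * (k : ℝ) ^ 3 + 138 * (k : ℝ) ^ 2 + 216 * (k : ℝ) + 112) / (6 * ((k : ℝ) + 1)) -
        ((k : ℝ) + 2) ^ 5 /
          (6 * ((k : ℝ) + 1) * ((5 * (k : ℝ) ^ 2 + 20 * (k : ℝ) + 20) + 6 * U')) ↔
      U = (2 * (k : ℝ) + 3) * (2 * (k : ℝ) + 4) +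
        ((k : ℝ) + 2) ^ 3 /
          (((k : ℝ) + 1) + ((k : ℝ) + 1) /
            (4 + 1 / (1 + ((k : ℝ) + 2) ^ 2 / U'))) :=
  U_cf_equiv_general k U U' hU' h1 h2 h3
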